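/- Let N ≥ 2 be an integer, 0 < s < 1, p > 1 with ps < N, and let β ≤ −ps. Then for every φ ∈ C_c^∞(ℝ^N) supported in the ball B₄(0) of radius 4 centered at the origin, satisfying 0 ≤ φ ≤ 1 and φ ≡ 1 on the unit ball B₁(0), the weighted Gagliardo energy diverges: ∬_{ℝ^N×ℝ^N} |φ(x)−φ(y)|^p / ( |x−y|^{N+ps} |x|^β |y|^β ) dx dy = +∞. -/

import Mathlib

open MeasureTheory Real Set Filter Metric
open scoped ENNReal Topology NNReal

noncomputable section

abbrev Euc (N : ℕ) := EuclideanSpace ℝ (Fin N)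

lemma tail_lintegral_infinite (N : ℕ) (hN : 1 ≤ N) (C : ℝ) (hC : 0 < C) :
    ∫⁻ y in {y : Euc N | 5 ≤ ‖y‖}, ENNReal.ofReal (C / ‖y‖ ^ (N : ℝ)) = ∞ := by
  set v : ℝ≥0∞ := volume (ball (0 : Euc N) 1) with hv
  have hv0 : v ≠ 0 := (measure_ball_pos _ _ one_pos).ne'
  set R : ℕ → ℝ := fun k => 5 * 2 ^ k with hR
  have hRpos : ∀ k, 0 < R k := fun k => by positivity
  have hR5 : ∀ k, 5 ≤ R k := fun k => by
    have : (1 : ℝ) ≤ 2 ^ k := one_le_pow₀ (by norm_num)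
    simp only [hR]; nlinarith
  have e : Euc N := EuclideanSpace.single ⟨0, by omega⟩ (1 : ℝ)
  set c : ℕ → Euc N := fun k => (3 * R k / 2) • EuclideanSpace.single (⟨0, by omega⟩ : Fin N) (1 : ℝ) with hc
  have hcnorm : ∀ k, ‖c k‖ = 3 * R k / 2 := fun k => by
    rw [hc, norm_smul, EuclideanSpace.norm_single, norm_one, mul_one, Real.norm_eq_abs,
      abs_of_pos (by linarith [hRpos k])]
  set B : ℕ → Set (Euc N) := fun k => ball (c k) (R k / 2) with hB
  have hmem : ∀ k, ∀ z ∈ B k, R k < ‖z‖ ∧ ‖z‖ < 2 * R k := by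
    intro k z hz
    rw [hB, mem_ball, dist_eq_norm] at hz
    have h1 : ‖c k‖ - ‖z‖ ≤ ‖z - c k‖ := by
      calc ‖c k‖ - ‖z‖ ≤ ‖c k - z‖ := norm_sub_norm_le _ _
        _ = ‖z - c k‖ := norm_sub_rev _ _
    have h2 : ‖z‖ - ‖c k‖ ≤ ‖z - c k‖ := norm_sub_norm_le _ _
    rw [hcnorm k] at h1 h2
    constructor <;> nlinarith
  -- subset of tail set
  have hsub : (⋃ k, B k) ⊆ {y : Euc N | 5 ≤ ‖y‖} := by
    rintro z hz
    obtain ⟨k, hk⟩ := mem_iUnion.1 hz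
    have := (hmem k z hk).1
    have := hR5 k
    simp only [mem_setOf_eq]; linarith
  -- disjointness
  have hdisj : Pairwise (Function.onFun Disjoint B) := by
    have key : ∀ k j, k < j → Disjoint (B k) (B j) := by
      intro k j hkj
      rw [Set.disjoint_left]
      intro z hzk hzj
      have h1 := (hmem k z hzk).2
      have h2 := (hmem j z hzj).1
      have : 2 * R k ≤ R j := by
        show 2 * (5 * 2 ^ k) ≤ 5 * 2 ^ j
        have : (2:ℝ) ^ (k+1) ≤ 2 ^ j := pow_le_pow_right₀ (by norm_num) hkj
        rw [pow_succ] at this; nlinarith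
      linarith
    intro k j hkj
    rcases lt_or_gt_of_ne hkj with h | h
    · exact key k j h
    · exact (key j k h).symm
  -- per-ball lower bound
  set ε : ℝ≥0∞ := ENNReal.ofReal (C / 4 ^ (N : ℝ)) * v with hε
  have hε0 : ε ≠ 0 := by
    rw [hε]
    refine mul_ne_zero ?_ hv0
    simp only [ne_eq, ENNReal.ofReal_eq_zero, not_le]
    positivity
  have key : ∀ k, ε ≤ ∫⁻ y in B k, ENNReal.ofReal (C / ‖y‖ ^ (N : ℝ)) := by
    intro k
    have step1 : ∫⁻ y in B k, ENNReal.ofReal (C / (2 * R k) ^ (N : ℝ))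
        ≤ ∫⁻ y in B k, ENNReal.ofReal (C / ‖y‖ ^ (N : ℝ)) := by
      refine setLIntegral_mono' measurableSet_ball fun y hy => ?_
      refine ENNReal.ofReal_le_ofReal ?_
      have h1 := (hmem k y hy).1
      have h2 := (hmem k y hy).2
      have hy0 : 0 < ‖y‖ := lt_trans (hRpos k) h1
      have hpow : ‖y‖ ^ (N:ℝ) ≤ (2 * R k) ^ (N:ℝ) :=
        Real.rpow_le_rpow (norm_nonneg y) h2.le (by positivity)
      have hpow0 : (0:ℝ) < ‖y‖ ^ (N:ℝ) := Real.rpow_pos_of_pos hy0 _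
      gcongr
    haveI : Nontrivial (Euc N) := by
      refine ⟨0, EuclideanSpace.single ⟨0, by omega⟩ (1:ℝ), fun h => ?_⟩
      have := congrArg norm h
      simp [EuclideanSpace.norm_single] at this
    have vol : volume (B k) = ENNReal.ofReal ((R k / 2) ^ (N : ℝ)) * v := by
      rw [hB, Measure.addHaar_ball _ _ (by linarith [hRpos k] : (0:ℝ) ≤ R k / 2)]
      rw [finrank_euclideanSpace_fin, ← Real.rpow_natCast]
    have const : ∫⁻ y in B k, ENNReal.ofReal (C / (2 * R k) ^ (N : ℝ))
        = ENNReal.ofReal (C / (2 * R k) ^ (N : ℝ)) * volume (B k) := setLIntegral_const _ _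
    have calc1 : ENNReal.ofReal (C / (2 * R k) ^ (N : ℝ)) * ENNReal.ofReal ((R k / 2) ^ (N : ℝ))
        = ENNReal.ofReal (C / 4 ^ (N : ℝ)) := by
      rw [← ENNReal.ofReal_mul (by positivity)]
      congr 1
      have hRk := hRpos k
      have h2R : ((2 : ℝ) * R k) ^ (N:ℝ) = 2 ^ (N:ℝ) * R k ^ (N:ℝ) :=
        Real.mul_rpow (by norm_num) hRk.le
      have hR2 : (R k / 2) ^ (N:ℝ) = R k ^ (N:ℝ) / 2 ^ (N:ℝ) :=
        Real.div_rpow hRk.le (by norm_num) _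
      have h4 : (4 : ℝ) ^ (N:ℝ) = 2 ^ (N:ℝ) * 2 ^ (N:ℝ) := by
        rw [show (4:ℝ) = 2 * 2 by norm_num, Real.mul_rpow] <;> norm_num
      rw [h2R, hR2, h4]
      have p1 : (0:ℝ) < 2 ^ (N:ℝ) := by positivity
      have p2 : (0:ℝ) < R k ^ (N:ℝ) := Real.rpow_pos_of_pos hRk _
      field_simp
    calc ε = ENNReal.ofReal (C / (2 * R k) ^ (N : ℝ)) *
        (ENNReal.ofReal ((R k / 2) ^ (N : ℝ)) * v) := by
          rw [hε, ← mul_assoc, calc1]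
      _ = ∫⁻ y in B k, ENNReal.ofReal (C / (2 * R k) ^ (N : ℝ)) := by rw [const, vol]
      _ ≤ _ := step1
  rw [eq_top_iff]
  calc (⊤ : ℝ≥0∞) = ∑' _ : ℕ, ε := (ENNReal.tsum_const_eq_top_of_ne_zero hε0).symm
    _ ≤ ∑' k, ∫⁻ y in B k, ENNReal.ofReal (C / ‖y‖ ^ (N : ℝ)) := ENNReal.tsum_le_tsum key
    _ = ∫⁻ y in ⋃ k, B k, ENNReal.ofReal (C / ‖y‖ ^ (N : ℝ)) :=
        (lintegral_iUnion (fun k => measurableSet_ball) hdisj _).symm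
    _ ≤ _ := lintegral_mono_set hsub

/-- The weighted Gagliardo energy
`∬ |u(x)-u(y)|^p / (|x-y|^{N+ps} |x|^β |y|^β) dx dy` (valued in `ℝ≥0∞`). -/
def weightedGagliardoEnergy (N : ℕ) (p s β : ℝ) (u : Euc N → ℝ) : ℝ≥0∞ :=
  ∫⁻ x, ∫⁻ y, ENNReal.ofReal
    (|u x - u y| ^ p / (‖x - y‖ ^ ((N : ℝ) + p * s) * ‖x‖ ^ β * ‖y‖ ^ β))

/-- **Degenerate weights are not admissible.** If `β ≤ -ps`, then every `φ ∈ C_c^∞(ℝ^N)`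
supported in `B₄(0)`, with `0 ≤ φ ≤ 1` and `φ ≡ 1` on `B₁(0)`, has infinite weighted
Gagliardo energy. -/
theorem weighted_energy_infinite_of_degenerate (N : ℕ) (hN : 2 ≤ N) (s p β : ℝ)
    (hs0 : 0 < s) (hs1 : s < 1) (hp1 : 1 < p) (hps : p * s < N) (hβ : β ≤ -(p * s)) :
    ∀ φ : Euc N → ℝ, ContDiff ℝ (⊤ : ℕ∞) φ → HasCompactSupport φ →
      tsupport φ ⊆ Metric.ball (0 : Euc N) 4 →
      (∀ x, 0 ≤ φ x) → (∀ x, φ x ≤ 1) →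
      (∀ x ∈ Metric.ball (0 : Euc N) 1, φ x = 1) →
      weightedGagliardoEnergy N p s β φ = ∞ := by
  intro φ hsm hcs hsupp h0 h1 hball
  have hA : (0:ℝ) < (N:ℝ) + p * s := by positivity
  set A : ℝ := (N:ℝ) + p * s with hAdef
  set U : Set (Euc N) := ball (0 : Euc N) 1 \ {0} with hU
  -- inner integral is infinite for x ∈ U
  have inner : ∀ x ∈ U, (∫⁻ y, ENNReal.ofReal
      (|φ x - φ y| ^ p / (‖x - y‖ ^ A * ‖x‖ ^ β * ‖y‖ ^ β))) = ∞ := by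
    intro x hx
    obtain ⟨hx1, hx0⟩ := hx
    rw [mem_ball, dist_zero_right] at hx1
    have hxn : 0 < ‖x‖ := norm_pos_iff.2 hx0
    have hxβ : (0:ℝ) < ‖x‖ ^ β := Real.rpow_pos_of_pos hxn _
    set C : ℝ := 1 / (2 ^ A * ‖x‖ ^ β) with hCdef
    have hC : 0 < C := by positivity
    have hφx : φ x = 1 := hball x (by simpa [mem_ball, dist_zero_right] using hx1)
    rw [eq_top_iff]
    calc (⊤:ℝ≥0∞) = ∫⁻ y in {y : Euc N | 5 ≤ ‖y‖}, ENNReal.ofReal (C / ‖y‖ ^ (N:ℝ)) :=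
          (tail_lintegral_infinite N (by omega) C hC).symm
      _ ≤ ∫⁻ y in {y : Euc N | 5 ≤ ‖y‖}, ENNReal.ofReal
            (|φ x - φ y| ^ p / (‖x - y‖ ^ A * ‖x‖ ^ β * ‖y‖ ^ β)) := by
          refine setLIntegral_mono' (isClosed_le continuous_const continuous_norm).measurableSet
            fun y hy => ?_
          simp only [mem_setOf_eq] at hy
          have hyn : (0:ℝ) < ‖y‖ := by linarith
          have hφy : φ y = 0 := by
            apply image_eq_zero_of_notMem_tsupport
            intro hmem
            have := hsupp hmem
            rw [mem_ball, dist_zero_right] at this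
            linarith
          have hnum : |φ x - φ y| ^ p = 1 := by
            rw [hφx, hφy]; norm_num
          have hD : 0 < ‖x - y‖ ^ A * ‖x‖ ^ β * ‖y‖ ^ β := by
            have : x - y ≠ 0 := by
              intro h; rw [sub_eq_zero] at h; rw [h] at hx1; linarith
            have := norm_pos_iff.2 this
            positivity
          refine ENNReal.ofReal_le_ofReal ?_
          rw [hnum]
          have hDle : ‖x - y‖ ^ A * ‖x‖ ^ β * ‖y‖ ^ β ≤ 2 ^ A * ‖x‖ ^ β * ‖y‖ ^ (N:ℝ) := by
            have hxy : ‖x - y‖ ≤ 2 * ‖y‖ := by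
              calc ‖x - y‖ ≤ ‖x‖ + ‖y‖ := norm_sub_le _ _
                _ ≤ 2 * ‖y‖ := by linarith
            have e1 : ‖x - y‖ ^ A ≤ (2 * ‖y‖) ^ A :=
              Real.rpow_le_rpow (norm_nonneg _) hxy hA.le
            have e2 : ‖y‖ ^ β ≤ ‖y‖ ^ (-(p*s)) :=
              Real.rpow_le_rpow_of_exponent_le (by linarith) hβ
            have e3 : (2 * ‖y‖) ^ A = 2 ^ A * ‖y‖ ^ A :=
              Real.mul_rpow (by norm_num) (norm_nonneg _)
            have e4 : ‖y‖ ^ A * ‖y‖ ^ (-(p*s)) = ‖y‖ ^ (N:ℝ) := by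
              rw [← Real.rpow_add hyn]; congr 1; rw [hAdef]; ring
            calc ‖x - y‖ ^ A * ‖x‖ ^ β * ‖y‖ ^ β
                ≤ (2 * ‖y‖) ^ A * ‖x‖ ^ β * ‖y‖ ^ (-(p*s)) := by
                  have hyβ : (0:ℝ) < ‖y‖ ^ β := Real.rpow_pos_of_pos hyn _
                  have h2 : (0:ℝ) ≤ (2 * ‖y‖) ^ A := Real.rpow_nonneg (by positivity) _
                  apply mul_le_mul
                  · exact mul_le_mul_of_nonneg_right e1 hxβ.le
                  · exact e2
                  · exact hyβ.le
                  · positivity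
              _ = 2 ^ A * ‖x‖ ^ β * ‖y‖ ^ (N:ℝ) := by
                  rw [e3, ← e4]; ring
          calc C / ‖y‖ ^ (N:ℝ) = 1 / (2 ^ A * ‖x‖ ^ β * ‖y‖ ^ (N:ℝ)) := by
                rw [hCdef, div_div]
            _ ≤ 1 / (‖x - y‖ ^ A * ‖x‖ ^ β * ‖y‖ ^ β) :=
                one_div_le_one_div_of_le hD hDle
      _ ≤ _ := setLIntegral_le_lintegral _ _
  -- outer integral
  haveI : Nontrivial (Euc N) := by
    refine ⟨0, EuclideanSpace.single ⟨0, by omega⟩ (1:ℝ), fun h => ?_⟩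
    have := congrArg norm h
    simp [EuclideanSpace.norm_single] at this
  rw [weightedGagliardoEnergy, eq_top_iff]
  calc (⊤:ℝ≥0∞) = ⊤ * volume U := by
        rw [ENNReal.top_mul]
        rw [hU, measure_diff_null (measure_singleton _)]
        exact (measure_ball_pos _ _ one_pos).ne'
    _ = ∫⁻ x in U, (⊤:ℝ≥0∞) := (setLIntegral_const _ _).symm
    _ = ∫⁻ x in U, ∫⁻ y, ENNReal.ofReal
          (|φ x - φ y| ^ p / (‖x - y‖ ^ A * ‖x‖ ^ β * ‖y‖ ^ β)) := by
        refine (setLIntegral_congr_fun (measurableSet_ball.diff (measurableSet_singleton _))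
          (fun x hx => ?_)).symm
        exact inner x hx
    _ ≤ _ := setLIntegral_le_lintegral _ _
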